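/- arXiv:2003.14296 — 10 statements merged into one kernel-verified Lean document; each statement's English description precedes it below -/
import Mathlib

section
/- Let G be a group with a left-invariant total order ≤, and let ≤_C be the relation defined by f ≤_C g iff fh ≤ gh for all h. For any positive integer n and any f ∈ G, if f^n ≤_C 1 then f ≤_C 1. -/
/-! If `x < f x` for some `x`, left invariance turns this into the increasing chain
`x ≤ f x ≤ f² x ≤ ⋯`, so `f x ≤ fⁿ x` and `fⁿ x ≤ x` cannot hold together. -/

section LeftInvariantRelation

variable {M : Type*} [Monoid M] {le : M → M → Prop}
  (hleft : ∀ f g h : M, le g h → le (f * g) (f * h))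
include hleft

theorem le_pow_mul_of_le_mul [Std.Refl le] [IsTrans M le] {f x : M} (hx : le x (f * x)) :
    ∀ k : ℕ, le x (f ^ k * x)
  | 0 => by simpa using refl_of le x
  | k + 1 => by
    have hstep : le (f * x) (f * (f ^ k * x)) := hleft f _ _ (le_pow_mul_of_le_mul hx k)
    simpa [pow_succ', mul_assoc] using trans_of le hx hstep

theorem mul_le_of_pow_mul_le [Std.Total le] [IsTrans M le] {n : ℕ} (hn : 0 < n) {f x : M}
    (h : le (f ^ n * x) x) : le (f * x) x := by
  by_contra hfx
  have hx : le x (f * x) := (total_of le (f * x) x).resolve_left hfx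
  obtain ⟨m, rfl⟩ := Nat.exists_eq_succ_of_ne_zero hn.ne'
  have hstep : le (f * x) (f * (f ^ m * x)) := hleft f _ _ (le_pow_mul_of_le_mul hleft hx m)
  rw [pow_succ', mul_assoc] at h
  exact hfx (trans_of le hstep h)

end LeftInvariantRelation

/-- With `≤_C` defined from a left-invariant total order,
`f^n ≤_C 1` for a positive integer `n` implies `f ≤_C 1`. -/
theorem leC_root
    (G : Type*) [Group G] (le : G → G → Prop)
    (hlin : IsLinearOrder G le)
    (hleft : ∀ f g h : G, le g h → le (f * g) (f * h))
    (leC : G → G → Prop)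
    (hleC : ∀ f g : G, leC f g ↔ ∀ h : G, le (f * h) (g * h))
    (n : ℕ) (hn : 0 < n) (f : G) (h : leC (f ^ n) 1) :
    leC f 1 := by
  rw [hleC] at h ⊢
  intro x
  simpa using mul_le_of_pow_mul_le hleft hn (by simpa using h x)
end

section
/- Let G be a group acting on ℝ by orientation-preserving homeomorphisms via a monomorphism ρ: G → Homeo₊(ℝ) compatible with a left order ≤ (i.e., f ≤ g iff ρ(f)(0) ≤ ρ(g)(0)). Let S_k ⊆ G be such that the homeomorphisms ρ(g) for g ∈ S_k are either all pointwise ≥ the identity map, or all pointwise ≤ the identity map. Then the partial order ≤_C (defined by f ≤_C g iff fh ≤ gh for all h) is an extension of the preorder ≤_k generated by S_k, or an extension of its inverse. -/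
/-- The root-closed, conjugacy-closed submonoid generated by `S`. -/
inductive RCCSubmonoid {G : Type*} [Group G] (S : Set G) : G → Prop
  | of {g : G} : g ∈ S → RCCSubmonoid S g
  | one : RCCSubmonoid S 1
  | mul {f g : G} : RCCSubmonoid S f → RCCSubmonoid S g → RCCSubmonoid S (f * g)
  | conj {f : G} (g : G) : RCCSubmonoid S f → RCCSubmonoid S (g * f * g⁻¹)
  | root {f : G} (n : ℕ) : 0 < n → RCCSubmonoid S (f ^ n) → RCCSubmonoid S f


lemma rcc_pointwise_ge {G : Type*} [Group G] (ρ : G →* (ℝ ≃o ℝ)) (S : Set G)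
    (hs : ∀ g ∈ S, ∀ x : ℝ, x ≤ ρ g x) :
    ∀ m : G, RCCSubmonoid S m → ∀ x : ℝ, x ≤ ρ m x := by
  intro m hm
  induction hm with
  | of h => exact hs _ h
  | one => intro x; simp
  | mul hf hg ihf ihg =>
    intro x
    calc x ≤ ρ _ x := ihg x
    _ ≤ ρ _ (ρ _ x) := ihf _
    _ = ρ (_ * _) x := by rw [map_mul]; rfl
  | conj g hf ih =>
    intro x
    have := (ρ g).monotone (ih ((ρ g⁻¹) x))
    have h2 : ρ g (ρ g⁻¹ x) = x := by
      have : ρ g * ρ g⁻¹ = 1 := by rw [← map_mul, mul_inv_cancel, map_one]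
      calc ρ g (ρ g⁻¹ x) = (ρ g * ρ g⁻¹) x := rfl
      _ = x := by rw [this]; rfl
    calc x = ρ g (ρ g⁻¹ x) := h2.symm
    _ ≤ ρ g (ρ _ (ρ g⁻¹ x)) := this
    _ = ρ (g * _ * g⁻¹) x := by rw [map_mul, map_mul]; rfl
  | @root f n hn hfn ih =>
    intro x
    by_contra hlt
    push_neg at hlt
    have key : ∀ k : ℕ, 0 < k → ρ (f ^ k) x < x := by
      intro k hk
      induction k with
      | zero => exact absurd hk (by simp)
      | succ k ihk =>
        rcases Nat.eq_zero_or_pos k with hk0 | hk0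
        · subst hk0; simpa using hlt
        · have h1 : ρ (f ^ (k + 1)) x = ρ f (ρ (f ^ k) x) := by
            rw [pow_succ', map_mul]; rfl
          have := (ρ f).strictMono (ihk hk0)
          rw [h1]
          exact lt_trans this hlt
    exact absurd (ih x) (not_le.mpr (key n hn))


lemma rcc_pointwise_le {G : Type*} [Group G] (ρ : G →* (ℝ ≃o ℝ)) (S : Set G)
    (hs : ∀ g ∈ S, ∀ x : ℝ, ρ g x ≤ x) :
    ∀ m : G, RCCSubmonoid S m → ∀ x : ℝ, ρ m x ≤ x := by
  intro m hm
  induction hm with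
  | of h => exact hs _ h
  | one => intro x; simp
  | mul hf hg ihf ihg =>
    intro x
    calc ρ (_ * _) x = ρ _ (ρ _ x) := by rw [map_mul]; rfl
    _ ≤ ρ _ x := ihf _
    _ ≤ x := ihg x
  | conj g hf ih =>
    intro x
    have := (ρ g).monotone (ih ((ρ g⁻¹) x))
    have h2 : ρ g (ρ g⁻¹ x) = x := by
      have : ρ g * ρ g⁻¹ = 1 := by rw [← map_mul, mul_inv_cancel, map_one]
      calc ρ g (ρ g⁻¹ x) = (ρ g * ρ g⁻¹) x := rfl
      _ = x := by rw [this]; rfl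
    calc ρ (g * _ * g⁻¹) x = ρ g (ρ _ (ρ g⁻¹ x)) := by rw [map_mul, map_mul]; rfl
    _ ≤ ρ g (ρ g⁻¹ x) := this
    _ = x := h2
  | @root f n hn hfn ih =>
    intro x
    by_contra hlt
    push_neg at hlt
    have key : ∀ k : ℕ, 0 < k → x < ρ (f ^ k) x := by
      intro k hk
      induction k with
      | zero => exact absurd hk (by simp)
      | succ k ihk =>
        rcases Nat.eq_zero_or_pos k with hk0 | hk0
        · subst hk0; simpa using hlt
        · have h1 : ρ (f ^ (k + 1)) x = ρ f (ρ (f ^ k) x) := by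
            rw [pow_succ', map_mul]; rfl
          have := (ρ f).strictMono (ihk hk0)
          rw [h1]
          exact lt_trans hlt this
    exact absurd (ih x) (not_le.mpr (key n hn))

/-- if the homeomorphisms `ρ g` for `g ∈ Sₖ` are all pointwise `≥ id` or all
pointwise `≤ id`, then `≤_C` extends `≤_k` or extends the inverse of `≤_k`. -/
theorem leC_extends_lek_or_inverse
    (G : Type*) [Group G] [Countable G] (le : G → G → Prop)
    (hlin : IsLinearOrder G le)
    (hleft : ∀ f g h : G, le g h → le (f * g) (f * h))
    (ρ : G →* (ℝ ≃o ℝ)) (hinj : Function.Injective ρ)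
    (hnofix : ¬ ∃ s : ℝ, ∀ g : G, ρ g s = s)
    (hcompat : ∀ f g : G, le f g ↔ ρ f 0 ≤ ρ g 0)
    (Sk : Set G)
    (hsign : (∀ g ∈ Sk, ∀ x : ℝ, x ≤ ρ g x) ∨ (∀ g ∈ Sk, ∀ x : ℝ, ρ g x ≤ x))
    (leC : G → G → Prop)
    (hleC : ∀ f g : G, leC f g ↔ ∀ h : G, le (f * h) (g * h))
    (lek : G → G → Prop)
    (hlek : ∀ f g : G, lek f g ↔ RCCSubmonoid Sk (f⁻¹ * g)) :
    (∀ f g : G, lek f g → leC f g) ∨ (∀ f g : G, lek f g → leC g f) := by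
  have key : ∀ (sgn : Bool), (∀ g ∈ Sk, ∀ x : ℝ, x ≤ ρ g x) →
      ∀ f g : G, lek f g → leC f g := by
    intro _ hs f g hfg
    rw [hleC]
    intro h
    rw [hcompat]
    have hm : ∀ x : ℝ, x ≤ ρ (f⁻¹ * g) x :=
      rcc_pointwise_ge ρ Sk hs _ ((hlek f g).mp hfg)
    have h1 : ρ (g * h) 0 = ρ f (ρ (f⁻¹ * g) (ρ h 0)) := by
      have e : g * h = f * ((f⁻¹ * g) * h) := by group
      rw [e, map_mul, map_mul]; rfl
    have h2 : ρ (f * h) 0 = ρ f (ρ h 0) := by rw [map_mul]; rfl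
    rw [h1, h2]
    exact (ρ f).monotone (hm _)
  rcases hsign with hpos | hneg
  · exact Or.inl (key true hpos)
  · right
    -- use the order-reversed statement: elements of the submonoid act pointwise ≤ id
    intro f g hfg
    rw [hleC]
    intro h
    rw [hcompat]
    have hm : ∀ x : ℝ, ρ (f⁻¹ * g) x ≤ x :=
      rcc_pointwise_le ρ Sk hneg _ ((hlek f g).mp hfg)
    have h1 : ρ (g * h) 0 = ρ f (ρ (f⁻¹ * g) (ρ h 0)) := by
      have e : g * h = f * ((f⁻¹ * g) * h) := by group
      rw [e, map_mul, map_mul]; rfl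
    have h2 : ρ (f * h) 0 = ρ f (ρ h 0) := by rw [map_mul]; rfl
    rw [h1, h2]
    exact (ρ f).monotone (hm _)
end

section
/- Let G be a left-orderable group with compatible monomorphism ρ: G → Homeo₊(ℝ), and suppose the homeomorphisms ρ(g), g ∈ S_k, are all pointwise ≥ the identity or all pointwise ≤ the identity. Then the preorder ≤_k generated by S_k is antisymmetric, hence a partial order. -/
private lemma rho_inv_cancel {G : Type*} [Group G] (ρ : G →* (ℝ ≃o ℝ)) (g : G) (x : ℝ) :
    ρ g (ρ g⁻¹ x) = x := by
  have h : ρ g (ρ g⁻¹ x) = ρ (g * g⁻¹) x := by rw [map_mul]; rfl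
  rw [h, mul_inv_cancel, map_one]
  rfl

private lemma rcc_pos {G : Type*} [Group G] (ρ : G →* (ℝ ≃o ℝ)) (Sk : Set G)
    (hs : ∀ g ∈ Sk, ∀ x : ℝ, x ≤ ρ g x) :
    ∀ g : G, RCCSubmonoid Sk g → ∀ x : ℝ, x ≤ ρ g x := by
  intro g hg
  induction hg with
  | of h => exact hs _ h
  | one => intro x; simp
  | @mul f g _ _ ihf ihg =>
      intro x
      have h1 : x ≤ ρ g x := ihg x
      have h2 : ρ g x ≤ ρ f (ρ g x) := ihf _
      calc x ≤ ρ f (ρ g x) := h1.trans h2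
        _ = ρ (f * g) x := by rw [map_mul]; rfl
  | @conj f g _ ihf =>
      intro x
      have h1 : ρ g⁻¹ x ≤ ρ f (ρ g⁻¹ x) := ihf _
      have h2 := (ρ g).monotone h1
      calc x = ρ g (ρ g⁻¹ x) := (rho_inv_cancel ρ g x).symm
        _ ≤ ρ g (ρ f (ρ g⁻¹ x)) := h2
        _ = ρ (g * f * g⁻¹) x := by rw [map_mul, map_mul]; rfl
  | @root f n hn _ ihf =>
      intro x
      by_contra hx
      push_neg at hx
      have key : ∀ m : ℕ, 0 < m → ρ (f ^ m) x < x := by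
        intro m hm
        induction m with
        | zero => exact absurd hm (lt_irrefl 0)
        | succ k ih =>
          rcases Nat.eq_zero_or_pos k with hk | hk
          · subst hk; simpa using hx
          · have h1 : ρ (f ^ k) x < x := ih hk
            have h2 : ρ f (ρ (f ^ k) x) < ρ f x := (ρ f).strictMono h1
            calc ρ (f ^ (k + 1)) x = ρ f (ρ (f ^ k) x) := by
                  rw [pow_succ', map_mul]; rfl
              _ < ρ f x := h2
              _ < x := hx
      exact absurd (ihf x) (not_le.mpr (key n hn))

private lemma rcc_neg {G : Type*} [Group G] (ρ : G →* (ℝ ≃o ℝ)) (Sk : Set G)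
    (hs : ∀ g ∈ Sk, ∀ x : ℝ, ρ g x ≤ x) :
    ∀ g : G, RCCSubmonoid Sk g → ∀ x : ℝ, ρ g x ≤ x := by
  intro g hg
  induction hg with
  | of h => exact hs _ h
  | one => intro x; simp
  | @mul f g _ _ ihf ihg =>
      intro x
      have h1 : ρ g x ≤ x := ihg x
      have h2 : ρ f (ρ g x) ≤ ρ g x := ihf _
      calc ρ (f * g) x = ρ f (ρ g x) := by rw [map_mul]; rfl
        _ ≤ x := h2.trans h1
  | @conj f g _ ihf =>
      intro x
      have h1 : ρ f (ρ g⁻¹ x) ≤ ρ g⁻¹ x := ihf _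
      have h2 := (ρ g).monotone h1
      calc ρ (g * f * g⁻¹) x = ρ g (ρ f (ρ g⁻¹ x)) := by rw [map_mul, map_mul]; rfl
        _ ≤ ρ g (ρ g⁻¹ x) := h2
        _ = x := rho_inv_cancel ρ g x
  | @root f n hn _ ihf =>
      intro x
      by_contra hx
      push_neg at hx
      have key : ∀ m : ℕ, 0 < m → x < ρ (f ^ m) x := by
        intro m hm
        induction m with
        | zero => exact absurd hm (lt_irrefl 0)
        | succ k ih =>
          rcases Nat.eq_zero_or_pos k with hk | hk
          · subst hk; simpa using hx
          · have h1 : x < ρ (f ^ k) x := ih hk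
            have h2 : ρ f x < ρ f (ρ (f ^ k) x) := (ρ f).strictMono h1
            calc x < ρ f x := hx
              _ < ρ f (ρ (f ^ k) x) := h2
              _ = ρ (f ^ (k + 1)) x := by rw [pow_succ', map_mul]; rfl
      exact absurd (ihf x) (not_le.mpr (key n hn))

/-- under the same hypotheses, the preorder `≤_k` is antisymmetric,
hence a partial order. -/
theorem lek_isPartialOrder
    (G : Type*) [Group G] [Countable G] (le : G → G → Prop)
    (hlin : IsLinearOrder G le)
    (hleft : ∀ f g h : G, le g h → le (f * g) (f * h))
    (ρ : G →* (ℝ ≃o ℝ)) (hinj : Function.Injective ρ)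
    (hnofix : ¬ ∃ s : ℝ, ∀ g : G, ρ g s = s)
    (hcompat : ∀ f g : G, le f g ↔ ρ f 0 ≤ ρ g 0)
    (Sk : Set G)
    (hsign : (∀ g ∈ Sk, ∀ x : ℝ, x ≤ ρ g x) ∨ (∀ g ∈ Sk, ∀ x : ℝ, ρ g x ≤ x))
    (lek : G → G → Prop)
    (hlek : ∀ f g : G, lek f g ↔ RCCSubmonoid Sk (f⁻¹ * g)) :
    IsPartialOrder G lek := by
  -- key: if both a and a⁻¹ are in the submonoid then a = 1
  have key : ∀ a : G, RCCSubmonoid Sk a → RCCSubmonoid Sk a⁻¹ → a = 1 := by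
    intro a ha ha'
    have hfix : ∀ x : ℝ, ρ a x = x := by
      intro x
      have h4 : ρ a (ρ a⁻¹ x) = x := rho_inv_cancel ρ a x
      rcases hsign with hs | hs
      · have h1 : x ≤ ρ a x := rcc_pos ρ Sk hs a ha x
        have h2 : x ≤ ρ a⁻¹ x := rcc_pos ρ Sk hs a⁻¹ ha' x
        have h3 : ρ a x ≤ ρ a (ρ a⁻¹ x) := (ρ a).monotone h2
        rw [h4] at h3
        exact le_antisymm h3 h1
      · have h1 : ρ a x ≤ x := rcc_neg ρ Sk hs a ha x
        have h2 : ρ a⁻¹ x ≤ x := rcc_neg ρ Sk hs a⁻¹ ha' x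
        have h3 : ρ a (ρ a⁻¹ x) ≤ ρ a x := (ρ a).monotone h2
        rw [h4] at h3
        exact le_antisymm h1 h3
    have hone : ρ a = 1 := by
      ext x
      exact hfix x
    exact hinj (hone.trans (map_one ρ).symm)
  refine { refl := ?_, trans := ?_, antisymm := ?_ }
  · intro a
    exact (hlek a a).mpr (by simpa using RCCSubmonoid.one)
  · intro a b c hab hbc
    refine (hlek a c).mpr ?_
    have h1 := (hlek a b).mp hab
    have h2 := (hlek b c).mp hbc
    have := RCCSubmonoid.mul h1 h2
    simpa [mul_assoc] using this
  · intro a b hab hba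
    have h1 : RCCSubmonoid Sk (a⁻¹ * b) := (hlek a b).mp hab
    have h2 : RCCSubmonoid Sk (a⁻¹ * b)⁻¹ := by
      have := (hlek b a).mp hba
      simpa [mul_inv_rev] using this
    have h3 : a⁻¹ * b = 1 := key _ h1 h2
    calc a = a * (a⁻¹ * b) := by rw [h3, mul_one]
      _ = b := by group
end

section
/- Let ρ be a homomorphism from a group G to the group of orientation-preserving homeomorphisms of ℝ. Let g₁, g₂ ∈ G, let g₃ be a product of elements from {g₁, g₂} containing at least one factor g₁, and let g₄ be a product of elements from {g₁⁻¹, g₂} containing at least one factor g₁⁻¹. If s ∈ ℝ is a common fixed point of ρ(g₃) and ρ(g₄), then s is a fixed point of ρ(g₁). -/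
/-!
Suppose `ρ g₁` moves `s`, say `s < ρ g₁ s` (otherwise replace `g₁` by `g₁⁻¹` and swap `g₃`, `g₄`).
Order-preserving maps that all move `s` weakly upwards compose to one that does, and strictly
if one factor moves `s` strictly. So if `ρ g₂` does not move `s` down, then `ρ g₃` moves `s` up;
and if it does, then `g₄⁻¹`, a product of `g₁` and `g₂⁻¹` containing `g₁`, moves `s` up.
Either way `s` is not a common fixed point.
-/

section OrderIso

variable {α : Type*} [Preorder α] (s : α)

theorem le_list_prod_apply {l : List (α ≃o α)} (h : ∀ f ∈ l, s ≤ f s) : s ≤ l.prod s := by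
  induction l with
  | nil => exact le_rfl
  | cons f l ih =>
    rw [List.forall_mem_cons] at h
    calc s ≤ f s := h.1
      _ ≤ f (l.prod s) := f.monotone (ih h.2)

theorem lt_list_prod_apply {l : List (α ≃o α)} (h : ∀ f ∈ l, s ≤ f s) {f : α ≃o α} (hf : f ∈ l)
    (hfs : s < f s) : s < l.prod s := by
  obtain ⟨l₁, l₂, rfl⟩ := List.append_of_mem hf
  have h₁ : ∀ g ∈ l₁, s ≤ g s := fun g hg => h g (by simp [hg])
  have h₂ : ∀ g ∈ l₂, s ≤ g s := fun g hg => h g (by simp [hg])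
  calc s ≤ l₁.prod s := le_list_prod_apply s h₁
    _ < l₁.prod (f (l₂.prod s)) :=
      l₁.prod.strictMono (hfs.trans_le (f.monotone (le_list_prod_apply s h₂)))
    _ = (l₁ ++ f :: l₂).prod s := by simp [List.prod_append, RelIso.mul_apply]

end OrderIso

def IsPositiveWord {M : Type*} [Monoid M] (a b g : M) : Prop :=
  ∃ w : List M, (∀ u ∈ w, u = a ∨ u = b) ∧ a ∈ w ∧ g = w.prod

theorem IsPositiveWord.inv {G : Type*} [Group G] {a b g : G} (h : IsPositiveWord a b g) :
    IsPositiveWord a⁻¹ b⁻¹ g⁻¹ := by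
  obtain ⟨w, hw, ha, rfl⟩ := h
  refine ⟨(w.map (·⁻¹)).reverse, ?_, by simpa using ha, List.prod_inv_reverse w⟩
  simp only [List.mem_reverse, List.mem_map, forall_exists_index, and_imp, forall_apply_eq_imp_iff₂]
  intro u hu
  rcases hw u hu with rfl | rfl <;> simp

section Action

variable {α : Type*} {s : α}

theorem IsPositiveWord.lt_apply {M : Type*} [Monoid M] [Preorder α] {ρ : M →* (α ≃o α)}
    {a b g : M} (h : IsPositiveWord a b g) (ha : s < ρ a s) (hb : s ≤ ρ b s) : s < ρ g s := by
  obtain ⟨w, hw, haw, rfl⟩ := h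
  rw [map_list_prod]
  refine lt_list_prod_apply s (f := ρ a) ?_ (List.mem_map_of_mem haw) ha
  simp only [List.mem_map, forall_exists_index, and_imp, forall_apply_eq_imp_iff₂]
  intro u hu
  rcases hw u hu with rfl | rfl
  exacts [ha.le, hb]

theorem lt_apply_inv_iff {G : Type*} [Group G] [Preorder α] {ρ : G →* (α ≃o α)} (g : G) :
    s < ρ g⁻¹ s ↔ ρ g s < s :=
  map_inv ρ g ▸ (ρ g).lt_symm_apply

variable {G : Type*} [Group G] [LinearOrder α] {ρ : G →* (α ≃o α)}

theorem not_lt_apply_of_isPositiveWord {a b g h : G} (hg : IsPositiveWord a b g)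
    (hh : IsPositiveWord a⁻¹ b h) (hgs : ρ g s = s) (hhs : ρ h s = s) : ¬ s < ρ a s := by
  intro ha
  rcases le_or_gt s (ρ b s) with hb | hb
  · exact (hg.lt_apply ha hb).ne' hgs
  · have hh' : IsPositiveWord a b⁻¹ h⁻¹ := by simpa using hh.inv
    have hhs' : ρ h⁻¹ s = s := by rw [map_inv]; exact (ρ h).symm_apply_eq.2 hhs.symm
    exact (hh'.lt_apply ha ((lt_apply_inv_iff b).2 hb).le).ne' hhs'

end Action

/-- if `g₃` is a product of factors from `{g₁, g₂}` with at least one factor `g₁`,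
and `g₄` is a product of factors from `{g₁⁻¹, g₂}` with at least one factor `g₁⁻¹`, then a
common fixed point of `ρ g₃` and `ρ g₄` is a fixed point of `ρ g₁`. -/
theorem fixed_point_general_rule
    (G : Type*) [Group G] (ρ : G →* (ℝ ≃o ℝ))
    (g₁ g₂ g₃ g₄ : G)
    (h₃ : ∃ w : List G, (∀ u ∈ w, u = g₁ ∨ u = g₂) ∧ g₁ ∈ w ∧ g₃ = w.prod)
    (h₄ : ∃ w : List G, (∀ u ∈ w, u = g₁⁻¹ ∨ u = g₂) ∧ g₁⁻¹ ∈ w ∧ g₄ = w.prod)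
    (s : ℝ) (hs₃ : ρ g₃ s = s) (hs₄ : ρ g₄ s = s) :
    ρ g₁ s = s := by
  have h₃' : IsPositiveWord g₁⁻¹⁻¹ g₂ g₃ := by rwa [inv_inv]
  have not_up : ¬ s < ρ g₁ s := not_lt_apply_of_isPositiveWord h₃ h₄ hs₃ hs₄
  have not_down : ¬ ρ g₁ s < s := fun hlt =>
    not_lt_apply_of_isPositiveWord h₄ h₃' hs₄ hs₃ ((lt_apply_inv_iff g₁).2 hlt)
  exact le_antisymm (not_lt.1 not_up) (not_lt.1 not_down)
end

section
/- Suppose p, q ≥ 3 are coprime positive integers. Let x be the multiplicative inverse of p modulo q with 0 ≤ x < q, and y the multiplicative inverse of q modulo p with 0 ≤ y < p. Then x < q/2 or y < p/2. -/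
/-- for coprime `p, q ≥ 3`, if `x` is the inverse of `p` mod `q` (`0 ≤ x < q`)
and `y` is the inverse of `q` mod `p` (`0 ≤ y < p`), then `x < q/2` or `y < p/2`. -/
theorem inverse_mod_small
    (p q x y : ℕ) (hp : 3 ≤ p) (hq : 3 ≤ q) (hpq : Nat.Coprime p q)
    (hx : x < q) (hxinv : p * x ≡ 1 [MOD q])
    (hy : y < p) (hyinv : q * y ≡ 1 [MOD p]) :
    2 * x < q ∨ 2 * y < p := by
  -- x and y are positive
  have hx1 : 1 ≤ x := by
    rcases Nat.eq_zero_or_pos x with h | h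
    · subst h
      have h0 : (0 : ℕ) % q = 1 % q := by simpa [Nat.ModEq] using hxinv
      rw [Nat.zero_mod, Nat.mod_eq_of_lt (by omega)] at h0
      omega
    · exact h
  have hy1 : 1 ≤ y := by
    rcases Nat.eq_zero_or_pos y with h | h
    · subst h
      have h0 : (0 : ℕ) % p = 1 % p := by simpa [Nat.ModEq] using hyinv
      rw [Nat.zero_mod, Nat.mod_eq_of_lt (by omega)] at h0
      omega
    · exact h
  -- CRT: p*x + q*y ≡ 1 [MOD p*q]
  have hmodq : p * x + q * y ≡ 1 + 0 [MOD q] :=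
    hxinv.add ((Nat.modEq_zero_iff_dvd).mpr ⟨y, rfl⟩)
  have hmodp : p * x + q * y ≡ 0 + 1 [MOD p] :=
    ((Nat.modEq_zero_iff_dvd).mpr ⟨x, rfl⟩).add hyinv
  have hSpq : p * x + q * y ≡ 1 [MOD p * q] :=
    (Nat.modEq_and_modEq_iff_modEq_mul hpq).mp ⟨by simpa using hmodp, by simpa using hmodq⟩
  -- bounds
  have hlbx : p ≤ p * x := Nat.le_mul_of_pos_right _ (by omega)
  have hlby : q ≤ q * y := Nat.le_mul_of_pos_right _ (by omega)
  have hubx : p * x + p ≤ p * q := by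
    calc p * x + p = p * (x + 1) := by ring
      _ ≤ p * q := Nat.mul_le_mul_left _ (by omega)
  have huby : q * y + q ≤ q * p := by
    calc q * y + q = q * (y + 1) := by ring
      _ ≤ q * p := Nat.mul_le_mul_left _ (by omega)
  have hle : 1 ≤ p * x + q * y := by omega
  obtain ⟨k, hk⟩ := (Nat.modEq_iff_dvd' hle).mp hSpq.symm
  have hk' : p * x + q * y = p * q * k + 1 := by omega
  -- k = 1
  have hk1 : 1 ≤ k := by
    rcases Nat.eq_zero_or_pos k with h | h
    · subst h; simp at hk'; omega
    · exact h
  have hk2 : k ≤ 1 := by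
    by_contra h
    push_neg at h
    have h2 : p * q * 2 ≤ p * q * k := Nat.mul_le_mul_left _ (by omega)
    have hqp : q * p = p * q := Nat.mul_comm q p
    nlinarith
  have hS : p * x + q * y = p * q + 1 := by
    have : k = 1 := le_antisymm hk2 hk1
    subst this; omega
  -- main argument
  by_contra hcon
  push_neg at hcon
  obtain ⟨hqx, hpy⟩ := hcon
  set a := 2 * x - q with ha_def
  set b := 2 * y - p with hb_def
  have ha : 2 * x = q + a := by omega
  have hb : 2 * y = p + b := by omega
  have h2 : 2 * (p * q) + (p * a + q * b) = 2 * (p * q) + 2 := by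
    calc 2 * (p * q) + (p * a + q * b) = p * (q + a) + q * (p + b) := by ring
      _ = p * (2 * x) + q * (2 * y) := by rw [ha, hb]
      _ = 2 * (p * x + q * y) := by ring
      _ = 2 * (p * q + 1) := by rw [hS]
      _ = 2 * (p * q) + 2 := by ring
  have key : p * a + q * b = 2 := by omega
  -- p, q ≥ 3 makes this impossible
  rcases Nat.eq_zero_or_pos a with haz | hap
  · rcases Nat.eq_zero_or_pos b with hbz | hbp
    · rw [haz, hbz] at key; simp at key
    · have : q ≤ q * b := Nat.le_mul_of_pos_right _ hbp
      omega
  · have : p ≤ p * a := Nat.le_mul_of_pos_right _ hap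
    omega
end

section
/- In the braid group B_{m+1}, with π_m = σ_m σ_{m-1} ⋯ σ_1, for any integer s with 2 ≤ s ≤ m one has π_m^s = π_{m-1} π_m^{s-1} σ_{s-1}. -/
/-- `braidPi σ k = σ_k σ_{k-1} ⋯ σ_1`. -/
def braidPi {G : Type*} [Group G] (σ : ℕ → G) : ℕ → G
  | 0 => 1
  | k + 1 => σ (k + 1) * braidPi σ k

section Aux

variable {G : Type*} [Group G] {m : ℕ} {σ : ℕ → G}

/-- D: `π_k` commutes with `σ_j` when `k + 2 ≤ j ≤ m`. -/
lemma braidPi_comm_far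
    (hcomm : ∀ i j : ℕ, 1 ≤ i → i + 2 ≤ j → j ≤ m → σ i * σ j = σ j * σ i) :
    ∀ k j : ℕ, k + 2 ≤ j → j ≤ m → braidPi σ k * σ j = σ j * braidPi σ k := by
  intro k
  induction k with
  | zero => intro j _ _; simp [braidPi]
  | succ k ih =>
    intro j h1 h2
    show σ (k + 1) * braidPi σ k * σ j = σ j * (σ (k + 1) * braidPi σ k)
    rw [mul_assoc, ih j (by omega) h2, ← mul_assoc,
      hcomm (k + 1) j (by omega) (by omega) h2, mul_assoc]

/-- A': `σ_k π_n = π_n σ_{k+1}` for `1 ≤ k`, `k + 1 ≤ n ≤ m`. -/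
lemma braidPi_shift
    (hcomm : ∀ i j : ℕ, 1 ≤ i → i + 2 ≤ j → j ≤ m → σ i * σ j = σ j * σ i)
    (hbraid : ∀ i : ℕ, 1 ≤ i → i + 1 ≤ m →
      σ i * σ (i + 1) * σ i = σ (i + 1) * σ i * σ (i + 1)) :
    ∀ n k : ℕ, 1 ≤ k → k + 1 ≤ n → n ≤ m →
      σ k * braidPi σ n = braidPi σ n * σ (k + 1) := by
  intro n
  induction n with
  | zero => intro k _ h _; omega
  | succ n ih =>
    intro k hk h1 h2
    rcases lt_or_eq_of_le h1 with h | h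
    · -- k + 1 ≤ n
      show σ k * (σ (n + 1) * braidPi σ n) = σ (n + 1) * braidPi σ n * σ (k + 1)
      rw [← mul_assoc, hcomm k (n + 1) hk (by omega) h2, mul_assoc,
        ih k hk (by omega) (by omega), mul_assoc]
    · -- k = n
      obtain ⟨k', rfl⟩ : ∃ k', k = k' + 1 := ⟨k - 1, by omega⟩
      have hn : n = k' + 1 := by omega
      subst hn
      show σ (k' + 1) * (σ (k' + 2) * (σ (k' + 1) * braidPi σ k'))
        = σ (k' + 2) * (σ (k' + 1) * braidPi σ k') * σ (k' + 2)
      have hb := hbraid (k' + 1) (by omega) (by omega)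
      have hd := braidPi_comm_far hcomm k' (k' + 2) (by omega) (by omega)
      calc σ (k' + 1) * (σ (k' + 2) * (σ (k' + 1) * braidPi σ k'))
          = σ (k' + 1) * σ (k' + 2) * σ (k' + 1) * braidPi σ k' := by
            rw [mul_assoc, mul_assoc]
        _ = σ (k' + 2) * σ (k' + 1) * σ (k' + 2) * braidPi σ k' := by rw [hb]
        _ = σ (k' + 2) * σ (k' + 1) * (braidPi σ k' * σ (k' + 2)) := by
            simp only [mul_assoc, hd]
        _ = σ (k' + 2) * (σ (k' + 1) * braidPi σ k') * σ (k' + 2) := by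
            rw [mul_assoc, mul_assoc, mul_assoc]

/-- C: `σ_{k+2} π_{k+1} σ_{k+2} = σ_{k+1} σ_{k+2} π_{k+1}` for `k + 2 ≤ m`. -/
lemma braidPi_swap
    (hcomm : ∀ i j : ℕ, 1 ≤ i → i + 2 ≤ j → j ≤ m → σ i * σ j = σ j * σ i)
    (hbraid : ∀ i : ℕ, 1 ≤ i → i + 1 ≤ m →
      σ i * σ (i + 1) * σ i = σ (i + 1) * σ i * σ (i + 1)) :
    ∀ k : ℕ, k + 2 ≤ m →
      σ (k + 2) * braidPi σ (k + 1) * σ (k + 2)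
        = σ (k + 1) * σ (k + 2) * braidPi σ (k + 1) := by
  intro k h
  have hb := hbraid (k + 1) (by omega) (by omega)
  have hd := braidPi_comm_far hcomm k (k + 2) (by omega) h
  show σ (k + 2) * (σ (k + 1) * braidPi σ k) * σ (k + 2)
    = σ (k + 1) * σ (k + 2) * (σ (k + 1) * braidPi σ k)
  have hb' : σ (k + 1) * σ (k + 2) * σ (k + 1) = σ (k + 2) * σ (k + 1) * σ (k + 2) := hb
  calc σ (k + 2) * (σ (k + 1) * braidPi σ k) * σ (k + 2)
      = σ (k + 2) * σ (k + 1) * (braidPi σ k * σ (k + 2)) := by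
        simp only [mul_assoc]
    _ = σ (k + 2) * σ (k + 1) * (σ (k + 2) * braidPi σ k) := by rw [hd]
    _ = σ (k + 2) * σ (k + 1) * σ (k + 2) * braidPi σ k := by
        simp only [mul_assoc]
    _ = σ (k + 1) * σ (k + 2) * σ (k + 1) * braidPi σ k := by rw [← hb']
    _ = σ (k + 1) * σ (k + 2) * (σ (k + 1) * braidPi σ k) := by
        simp only [mul_assoc]

/-- Q: base case `s = 2`: `π_{k+2}² = π_{k+1} π_{k+2} σ_1` for `k + 2 ≤ m`. -/
lemma braidPi_sq
    (hcomm : ∀ i j : ℕ, 1 ≤ i → i + 2 ≤ j → j ≤ m → σ i * σ j = σ j * σ i)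
    (hbraid : ∀ i : ℕ, 1 ≤ i → i + 1 ≤ m →
      σ i * σ (i + 1) * σ i = σ (i + 1) * σ i * σ (i + 1)) :
    ∀ k : ℕ, k + 2 ≤ m →
      braidPi σ (k + 2) ^ 2 = braidPi σ (k + 1) * braidPi σ (k + 2) * σ 1 := by
  intro k
  induction k with
  | zero =>
    intro h
    have hb := hbraid 1 le_rfl (by omega)
    have hb' : σ 1 * σ 2 * σ 1 = σ 2 * σ 1 * σ 2 := hb
    show (σ 2 * (σ 1 * braidPi σ 0)) ^ 2
      = σ 1 * braidPi σ 0 * (σ 2 * (σ 1 * braidPi σ 0)) * σ 1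
    simp only [braidPi, mul_one, sq, ← mul_assoc]
    rw [← hb']
  | succ k ih =>
    intro h
    have hC : σ (k + 3) * braidPi σ (k + 2) * σ (k + 3)
        = σ (k + 2) * σ (k + 3) * braidPi σ (k + 2) :=
      braidPi_swap hcomm hbraid (k + 1) h
    have hQ := ih (by omega)
    have hd := braidPi_comm_far hcomm (k + 1) (k + 3) (by omega) (by omega)
    show (σ (k + 3) * braidPi σ (k + 2)) ^ 2
      = braidPi σ (k + 2) * (σ (k + 3) * braidPi σ (k + 2)) * σ 1
    rw [sq] at hQ ⊢
    calc σ (k + 3) * braidPi σ (k + 2) * (σ (k + 3) * braidPi σ (k + 2))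
        = σ (k + 3) * braidPi σ (k + 2) * σ (k + 3) * braidPi σ (k + 2) := by
          simp only [mul_assoc]
      _ = σ (k + 2) * σ (k + 3) * braidPi σ (k + 2) * braidPi σ (k + 2) := by
          rw [hC]
      _ = σ (k + 2) * σ (k + 3) * (braidPi σ (k + 2) * braidPi σ (k + 2)) := by
          rw [mul_assoc]
      _ = σ (k + 2) * σ (k + 3) * (braidPi σ (k + 1) * braidPi σ (k + 2) * σ 1) := by
          rw [hQ]
      _ = σ (k + 2) * (σ (k + 3) * braidPi σ (k + 1)) * (braidPi σ (k + 2) * σ 1) := by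
          simp only [mul_assoc]
      _ = σ (k + 2) * (braidPi σ (k + 1) * σ (k + 3)) * (braidPi σ (k + 2) * σ 1) := by
          rw [hd]
      _ = braidPi σ (k + 2) * (σ (k + 3) * braidPi σ (k + 2)) * σ 1 := by
          show σ (k + 2) * (braidPi σ (k + 1) * σ (k + 3)) * (braidPi σ (k + 2) * σ 1)
            = σ (k + 2) * braidPi σ (k + 1) * (σ (k + 3) * braidPi σ (k + 2)) * σ 1
          simp only [mul_assoc]

end Aux

/-- `π_m^s = π_{m-1} π_m^{s-1} σ_{s-1}` for `2 ≤ s ≤ m`. -/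
theorem braidPi_pow
    (G : Type*) [Group G] (m : ℕ) (σ : ℕ → G)
    (hcomm : ∀ i j : ℕ, 1 ≤ i → i + 2 ≤ j → j ≤ m → σ i * σ j = σ j * σ i)
    (hbraid : ∀ i : ℕ, 1 ≤ i → i + 1 ≤ m →
      σ i * σ (i + 1) * σ i = σ (i + 1) * σ i * σ (i + 1))
    (s : ℕ) (hs1 : 2 ≤ s) (hs2 : s ≤ m) :
    braidPi σ m ^ s = braidPi σ (m - 1) * braidPi σ m ^ (s - 1) * σ (s - 1) := by
  obtain ⟨t, rfl⟩ : ∃ t, s = t + 2 := ⟨s - 2, by omega⟩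
  obtain ⟨u, hu⟩ : ∃ u, m = u + 2 := ⟨m - 2, by omega⟩
  clear hs1
  induction t with
  | zero =>
    have := braidPi_sq hcomm hbraid u (by omega)
    simpa [hu] using this
  | succ t ih =>
    have IH := ih (by omega)
    have hA := braidPi_shift hcomm hbraid m (t + 1) (by omega) (by omega) le_rfl
    calc braidPi σ m ^ (t + 1 + 2)
        = braidPi σ m ^ (t + 2) * braidPi σ m := by rw [pow_succ]
      _ = braidPi σ (m - 1) * braidPi σ m ^ (t + 2 - 1) * σ (t + 2 - 1)
            * braidPi σ m := by rw [IH]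
      _ = braidPi σ (m - 1) * braidPi σ m ^ (t + 1) * (σ (t + 1) * braidPi σ m) := by
          norm_num [mul_assoc]
      _ = braidPi σ (m - 1) * braidPi σ m ^ (t + 1) * (braidPi σ m * σ (t + 2)) := by
          rw [hA]
      _ = braidPi σ (m - 1) * (braidPi σ m ^ (t + 1) * braidPi σ m) * σ (t + 2) := by
          simp only [mul_assoc]
      _ = braidPi σ (m - 1) * braidPi σ m ^ (t + 1 + 2 - 1) * σ (t + 1 + 2 - 1) := by
          rw [← pow_succ]
          norm_num
end

section
/- In the braid group B_{m+1}, with π_m = σ_m σ_{m-1} ⋯ σ_1, for any integer s with 2 ≤ s ≤ m one has π_m^s = π_{m-1}^{s-1} π_m (σ_1 σ_2 ⋯ σ_{s-1}). -/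
/-- `braidAsc σ k = σ_1 σ_2 ⋯ σ_k`. -/
def braidAsc {G : Type*} [Group G] (σ : ℕ → G) : ℕ → G
  | 0 => 1
  | k + 1 => braidAsc σ k * σ (k + 1)

/-- Shifted ascending product `σ_2 σ_3 ⋯ σ_{k+1}`. -/
def ascSh {G : Type*} [Group G] (σ : ℕ → G) : ℕ → G
  | 0 => 1
  | k + 1 => ascSh σ k * σ (k + 2)

lemma asc_eq_ascSh {G : Type*} [Group G] (σ : ℕ → G) :
    ∀ k, braidAsc σ (k + 1) = σ 1 * ascSh σ k := by
  intro k
  induction k with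
  | zero => simp [braidAsc, ascSh]
  | succ k ih =>
    show braidAsc σ (k + 1) * σ (k + 2) = σ 1 * (ascSh σ k * σ (k + 2))
    rw [ih, mul_assoc]

lemma commPi {G : Type*} [Group G] (σ : ℕ → G) (m : ℕ)
    (hcomm : ∀ i j : ℕ, 1 ≤ i → i + 2 ≤ j → j ≤ m → σ i * σ j = σ j * σ i) :
    ∀ k j, k + 2 ≤ j → j ≤ m → σ j * braidPi σ k = braidPi σ k * σ j := by
  intro k
  induction k with
  | zero => intro j _ _; simp [braidPi]
  | succ k ih =>
    intro j h1 h2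
    have h3 := hcomm (k + 1) j (by omega) (by omega) h2
    show σ j * (σ (k + 1) * braidPi σ k) = (σ (k + 1) * braidPi σ k) * σ j
    rw [← mul_assoc, ← h3, mul_assoc, ih j (by omega) h2, ← mul_assoc]

lemma shiftLem {G : Type*} [Group G] (σ : ℕ → G) (m : ℕ)
    (hcomm : ∀ i j : ℕ, 1 ≤ i → i + 2 ≤ j → j ≤ m → σ i * σ j = σ j * σ i)
    (hbraid : ∀ i : ℕ, 1 ≤ i → i + 1 ≤ m →
      σ i * σ (i + 1) * σ i = σ (i + 1) * σ i * σ (i + 1)) :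
    ∀ n i, 1 ≤ i → i + 1 ≤ n → n ≤ m →
      σ i * braidPi σ n = braidPi σ n * σ (i + 1) := by
  intro n
  induction n with
  | zero => intro i _ h _; omega
  | succ n ih =>
    intro i h1 h2 h3
    rcases Nat.lt_or_ge (i + 1) (n + 1) with h | h
    · show σ i * (σ (n + 1) * braidPi σ n) = (σ (n + 1) * braidPi σ n) * σ (i + 1)
      rw [← mul_assoc, hcomm i (n + 1) h1 (by omega) h3, mul_assoc,
        ih i h1 (by omega) (by omega), ← mul_assoc]
    · obtain ⟨j, rfl⟩ : ∃ j, i = j + 1 := ⟨i - 1, by omega⟩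
      have hn : n = j + 1 := by omega
      subst hn
      show σ (j + 1) * (σ (j + 2) * (σ (j + 1) * braidPi σ j)) =
        (σ (j + 2) * (σ (j + 1) * braidPi σ j)) * σ (j + 2)
      have hb := hbraid (j + 1) (by omega) (by omega)
      have hc := commPi σ m hcomm j (j + 2) (by omega) (by omega)
      simp only [← mul_assoc]
      rw [hb, mul_assoc (σ (j + 2) * σ (j + 1)) (σ (j + 2)) (braidPi σ j), hc,
        ← mul_assoc]

lemma piShiftLem {G : Type*} [Group G] (σ : ℕ → G) (m : ℕ)
    (hcomm : ∀ i j : ℕ, 1 ≤ i → i + 2 ≤ j → j ≤ m → σ i * σ j = σ j * σ i)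
    (hbraid : ∀ i : ℕ, 1 ≤ i → i + 1 ≤ m →
      σ i * σ (i + 1) * σ i = σ (i + 1) * σ i * σ (i + 1)) :
    ∀ k, k + 1 ≤ m →
      braidPi σ k * braidPi σ m = braidPi σ m * braidPi σ (k + 1) * (σ 1)⁻¹ := by
  intro k
  induction k with
  | zero =>
    intro _
    show (1 : G) * braidPi σ m = braidPi σ m * (σ 1 * 1) * (σ 1)⁻¹
    group
  | succ k ih =>
    intro h
    show σ (k + 1) * braidPi σ k * braidPi σ m =
      braidPi σ m * (σ (k + 2) * braidPi σ (k + 1)) * (σ 1)⁻¹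
    rw [mul_assoc, ih (by omega), ← mul_assoc, ← mul_assoc,
      shiftLem σ m hcomm hbraid m (k + 1) (by omega) (by omega) (le_refl m),
      mul_assoc (braidPi σ m) (σ (k + 2)) (braidPi σ (k + 1))]

lemma ascShiftLem {G : Type*} [Group G] (σ : ℕ → G) (m : ℕ)
    (hcomm : ∀ i j : ℕ, 1 ≤ i → i + 2 ≤ j → j ≤ m → σ i * σ j = σ j * σ i)
    (hbraid : ∀ i : ℕ, 1 ≤ i → i + 1 ≤ m →
      σ i * σ (i + 1) * σ i = σ (i + 1) * σ i * σ (i + 1)) :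
    ∀ k, k + 1 ≤ m →
      braidAsc σ k * braidPi σ m = braidPi σ m * ascSh σ k := by
  intro k
  induction k with
  | zero => intro _; simp [braidAsc, ascSh]
  | succ k ih =>
    intro h
    show braidAsc σ k * σ (k + 1) * braidPi σ m =
      braidPi σ m * (ascSh σ k * σ (k + 2))
    rw [mul_assoc, shiftLem σ m hcomm hbraid m (k + 1) (by omega) (by omega) (le_refl m),
      ← mul_assoc, ih (by omega), mul_assoc]

/-- `π_m^s = π_{m-1}^{s-1} π_m (σ_1 σ_2 ⋯ σ_{s-1})` for `2 ≤ s ≤ m`. -/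
theorem braidPi_pow_asc
    (G : Type*) [Group G] (m : ℕ) (σ : ℕ → G)
    (hcomm : ∀ i j : ℕ, 1 ≤ i → i + 2 ≤ j → j ≤ m → σ i * σ j = σ j * σ i)
    (hbraid : ∀ i : ℕ, 1 ≤ i → i + 1 ≤ m →
      σ i * σ (i + 1) * σ i = σ (i + 1) * σ i * σ (i + 1))
    (s : ℕ) (hs1 : 2 ≤ s) (hs2 : s ≤ m) :
    braidPi σ m ^ s = braidPi σ (m - 1) ^ (s - 1) * braidPi σ m * braidAsc σ (s - 1) := by
  have hm1 : m - 1 + 1 = m := by omega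
  have hsq : braidPi σ m * braidPi σ m = braidPi σ (m - 1) * braidPi σ m * σ 1 := by
    have h := piShiftLem σ m hcomm hbraid (m - 1) (by omega)
    rw [hm1] at h
    rw [h]; group
  revert hs2
  induction s, hs1 using Nat.le_induction with
  | base =>
    intro _
    show braidPi σ m ^ 2 = braidPi σ (m - 1) ^ 1 * braidPi σ m * braidAsc σ 1
    rw [pow_two, pow_one, hsq]
    simp [braidAsc]
  | succ s hs ih =>
    intro hs2
    have H := ih (by omega)
    obtain ⟨t, rfl⟩ : ∃ t, s = t + 2 := ⟨s - 2, by omega⟩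
    show braidPi σ m ^ (t + 3) = braidPi σ (m - 1) ^ (t + 2) * braidPi σ m * braidAsc σ (t + 2)
    have Hs : braidPi σ m ^ (t + 2) =
        braidPi σ (m - 1) ^ (t + 1) * braidPi σ m * braidAsc σ (t + 1) := H
    rw [pow_succ, Hs, mul_assoc,
      ascShiftLem σ m hcomm hbraid (t + 1) (by omega), ← mul_assoc, mul_assoc _ (braidPi σ m) (braidPi σ m),
      hsq, asc_eq_ascSh σ (t + 1)]
    simp only [← mul_assoc, ← pow_succ]
end

section
/- Let G = ⟨a, b | a²b⁻²ab⁻²a²ba²baba²b = 1⟩, let μ = b⁻²ab⁻²ab⁻¹ and λ = a⁻²b⁻¹a⁻²b. For any homomorphism ρ from G to the group of orientation-preserving homeomorphisms of ℝ, if s ∈ ℝ is a fixed point of ρ(μ), then s is a fixed point of ρ(g) for every g ∈ G. -/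
/-- The relator `a²b⁻²ab⁻²a²ba²baba²b` in the free group on two generators. -/
def v2503Rel : FreeGroup (Fin 2) :=
  let a : FreeGroup (Fin 2) := FreeGroup.of 0
  let b : FreeGroup (Fin 2) := FreeGroup.of 1
  a ^ 2 * b⁻¹ ^ 2 * a * b⁻¹ ^ 2 * a ^ 2 * b * a ^ 2 * b * a * b * a ^ 2 * b

/-- The fundamental group of v2503: `⟨a, b | a²b⁻²ab⁻²a²ba²baba²b = 1⟩`. -/
abbrev V2503 : Type := PresentedGroup ({v2503Rel} : Set (FreeGroup (Fin 2)))

/-- The generator `a`. -/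
def va : V2503 := PresentedGroup.of 0

/-- The generator `b`. -/
def vb : V2503 := PresentedGroup.of 1

/-- The meridian `μ = b⁻²ab⁻²ab⁻¹`. -/
def vmu : V2503 := vb⁻¹ ^ 2 * va * vb⁻¹ ^ 2 * va * vb⁻¹

/-- The longitude `λ = a⁻²b⁻¹a⁻²b`. -/
def vlam : V2503 := va⁻¹ ^ 2 * vb⁻¹ * va⁻¹ ^ 2 * vb

/-!
Write `A = ρ(a)`, `B = ρ(b)`. A positive word in order automorphisms that all push `s` weakly
upward can fix `s` only if each of its letters does. If `A` pushes `s` up and `B` pushes it down,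
apply this to `μ`, a positive word in `A` and `B⁻¹`; if both push `s` up, apply it to `μ⁻¹`, which
the relator turns into the positive word `bab a² bab a² b a²`. Passing to the reversed order treats
the case where `A` pushes `s` down. So `a` and `b` fix `s`, and hence so does all of `G`.
-/

namespace OrderIso

variable {α : Type*} [PartialOrder α]

def nonnegAt (s : α) : Submonoid (α ≃o α) where
  carrier := {f | s ≤ f s}
  mul_mem' {f _} hf hg := hf.trans (f.monotone hg)
  one_mem' := le_rfl

theorem inv_mem_nonnegAt {s : α} {f : α ≃o α} : f⁻¹ ∈ nonnegAt s ↔ f s ≤ s :=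
  le_symm_apply f

theorem apply_eq_and_apply_eq_of_mul_apply_eq {s : α} {f g : α ≃o α} (hf : f ∈ nonnegAt s)
    (hg : g ∈ nonnegAt s) (h : (f * g) s = s) : f s = s ∧ g s = s := by
  have hfs : f s = s := le_antisymm ((f.monotone hg).trans_eq h) hf
  exact ⟨hfs, f.injective (h.trans hfs.symm)⟩

end OrderIso

namespace V2503

variable {α : Type*}

open OrderIso

theorem apply_eq_of_nonneg_mu_apply_eq [PartialOrder α] {s : α} {x y : α ≃o α}
    (hx : x ∈ nonnegAt s) (hy : y ∈ nonnegAt s) (h : (y ^ 2 * x * y ^ 2 * x * y) s = s) :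
    x s = s ∧ y s = s := by
  obtain ⟨h₁, hys⟩ := apply_eq_and_apply_eq_of_mul_apply_eq
    (by apply_rules [mul_mem, pow_mem]) hy h
  exact ⟨(apply_eq_and_apply_eq_of_mul_apply_eq (by apply_rules [mul_mem, pow_mem]) hx h₁).2, hys⟩

theorem apply_eq_of_nonneg_mu_inv_apply_eq [PartialOrder α] {s : α} {x y : α ≃o α}
    (hx : x ∈ nonnegAt s) (hy : y ∈ nonnegAt s)
    (h : (y * x * y * x ^ 2 * y * x * y * x ^ 2 * y * x ^ 2) s = s) : x s = s ∧ y s = s := by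
  obtain ⟨h₁, hx₂⟩ := apply_eq_and_apply_eq_of_mul_apply_eq
    (by apply_rules [mul_mem, pow_mem]) (pow_mem hx 2) h
  rw [pow_two] at hx₂
  exact ⟨(apply_eq_and_apply_eq_of_mul_apply_eq hx hx hx₂).1,
    (apply_eq_and_apply_eq_of_mul_apply_eq (by apply_rules [mul_mem, pow_mem]) hy h₁).2⟩

theorem apply_eq_of_le_apply [LinearOrder α] {s : α} {A B : α ≃o α}
    (hμ : (B⁻¹ ^ 2 * A * B⁻¹ ^ 2 * A * B⁻¹) s = s)
    (hμ_inv : (B * A * B * A ^ 2 * B * A * B * A ^ 2 * B * A ^ 2) s = s) (hA : s ≤ A s) :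
    A s = s ∧ B s = s := by
  rcases le_total (B s) s with hB | hB
  · obtain ⟨hAs, hBs⟩ := apply_eq_of_nonneg_mu_apply_eq hA (inv_mem_nonnegAt.2 hB) hμ
    exact ⟨hAs, B.symm_apply_eq.1 hBs |>.symm⟩
  · exact apply_eq_of_nonneg_mu_inv_apply_eq hA hB hμ_inv

theorem apply_eq_of_mu_apply_eq [LinearOrder α] {s : α} {A B : α ≃o α}
    (hμ : (B⁻¹ ^ 2 * A * B⁻¹ ^ 2 * A * B⁻¹) s = s)
    (hμ_inv : (B * A * B * A ^ 2 * B * A * B * A ^ 2 * B * A ^ 2) s = s) :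
    A s = s ∧ B s = s := by
  rcases le_total s (A s) with hA | hA
  · exact apply_eq_of_le_apply hμ hμ_inv hA
  · exact apply_eq_of_le_apply (α := αᵒᵈ) (A := A.dual) (B := B.dual) hμ hμ_inv hA

theorem rel_eq_one :
    va ^ 2 * vb⁻¹ ^ 2 * va * vb⁻¹ ^ 2 * va ^ 2 * vb * va ^ 2 * vb * va * vb * va ^ 2 * vb = 1 := by
  change PresentedGroup.mk _ v2503Rel = 1
  exact PresentedGroup.one_of_mem rfl

theorem mu_inv : vmu⁻¹ = vb * va * vb * va ^ 2 * vb * va * vb * va ^ 2 * vb * va ^ 2 := by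
  refine inv_eq_of_mul_eq_one_left ?_
  calc _ = (vb * va * vb * va ^ 2 * vb * va * vb * va ^ 2 * vb) *
          (va ^ 2 * vb⁻¹ ^ 2 * va * vb⁻¹ ^ 2 * va ^ 2 * vb * va ^ 2 * vb * va * vb * va ^ 2 * vb) *
          (vb * va * vb * va ^ 2 * vb * va * vb * va ^ 2 * vb)⁻¹ := by
        simp only [vmu]; group
    _ = 1 := by rw [rel_eq_one]; group

end V2503

/-- any fixed point of `ρ(μ)` is a global fixed point of the `ρ`-action
of `π₁(v2503)` on `ℝ` by orientation-preserving homeomorphisms. -/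
theorem v2503_meridian_fixed_point_is_global
    (ρ : V2503 →* (ℝ ≃o ℝ)) (s : ℝ) (hs : ρ vmu s = s) :
    ∀ g : V2503, ρ g s = s := by
  let H := (MulAction.stabilizer (ℝ ≃o ℝ) s).comap ρ
  have hμ : vmu ∈ H := hs
  have hμ_inv : vmu⁻¹ ∈ H := H.inv_mem hμ
  rw [V2503.mu_inv] at hμ_inv
  simp only [vmu, H, Subgroup.mem_comap, MulAction.mem_stabilizer_iff, RelIso.smul_def,
    map_mul, map_pow, map_inv] at hμ hμ_inv
  obtain ⟨ha, hb⟩ := V2503.apply_eq_of_mu_apply_eq hμ hμ_inv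
  intro g
  refine PresentedGroup.generated_by _ H (fun i => ?_) g
  fin_cases i
  exacts [ha, hb]
end

section
/- In the group G = ⟨a, b | a²b⁻²ab⁻²a²ba²baba²b = 1⟩ with λ = a⁻²b⁻¹a⁻²b, the element λ lies in the root-closed, conjugacy-closed submonoid of G generated by λ⁻¹. -/
private def fa : FreeGroup (Fin 2) := FreeGroup.of 0
private def fb : FreeGroup (Fin 2) := FreeGroup.of 1

set_option maxHeartbeats 2000000 in
private theorem free_cert : (fa⁻¹ ^ 2 * fb⁻¹ * fa⁻¹ ^ 2 * fb)⁻¹ * (((fb⁻¹ * fb⁻¹ * fa * fb⁻¹) * (fa⁻¹ ^ 2 * fb⁻¹ * fa⁻¹ ^ 2 * fb)⁻¹ * (fb⁻¹ * fb⁻¹ * fa * fb⁻¹)⁻¹) * (((fb⁻¹ * fb⁻¹) * (fa⁻¹ ^ 2 * fb⁻¹ * fa⁻¹ ^ 2 * fb)⁻¹ * (fb⁻¹ * fb⁻¹)⁻¹) * (((fb⁻¹ * fb⁻¹ * fa⁻¹ * fa⁻¹ * fb⁻¹ * fa⁻¹ * fb⁻¹) * (fa⁻¹ ^ 2 * fb⁻¹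 * fa⁻¹ ^ 2 * fb)⁻¹ * (fb⁻¹ * fb⁻¹ * fa⁻¹ * fa⁻¹ * fb⁻¹ * fa⁻¹ * fb⁻¹)⁻¹) * ((fb⁻¹ * fa * fa) * (fa⁻¹ ^ 2 * fb⁻¹ * fa⁻¹ ^ 2 * fb)⁻¹ * (fb⁻¹ * fa * fa)⁻¹)))) = (fb⁻¹ * fa * fa * fb * fa * fa * fb⁻¹ * fb⁻¹ * fa * fb⁻¹ * fb⁻¹ * fa * fa * fb * fa * fa * fb * fa⁻¹ * fb⁻¹ * fa * fb⁻¹ * fb⁻¹ * fa * fa * fb * fa * fa * fb * fa * fb * fa * fa * fb) * (fa ^ 2 * fb⁻¹ ^ 2 * fa * fb⁻¹ ^ 2 * fa ^ 2 * fb * fa ^ 2 * fb * fa * fb * fa ^ 2 * fb) * (fb⁻¹ * fa * fa * fb * fa * fa * fb⁻¹ * fb⁻¹ * fa * fb⁻¹ * fb⁻¹ * fa * fa * fb * fa * fa * fb * fa⁻¹ * fb⁻¹ * fa * fb⁻¹ * fb⁻¹ * fa * fa * fb * fa * fa * fb * fa * fb * fa * fa * fb)⁻¹ * ((fb⁻¹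 * fa * fa * fb) * (fa ^ 2 * fb⁻¹ ^ 2 * fa * fb⁻¹ ^ 2 * fa ^ 2 * fb * fa ^ 2 * fb * fa * fb * fa ^ 2 * fb) * (fb⁻¹ * fa * fa * fb)⁻¹) := by decide

/-- `λ` lies in the root-closed, conjugacy-closed submonoid generated
by `λ⁻¹`. -/
theorem v2503_lambda_mem :
    RCCSubmonoid ({vlam⁻¹} : Set V2503) vlam := by
  have hrel : v2503Rel ∈ Subgroup.normalClosure ({v2503Rel} : Set (FreeGroup (Fin 2))) :=
    Subgroup.subset_normalClosure (Set.mem_singleton _)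
  have hRR : (fa ^ 2 * fb⁻¹ ^ 2 * fa * fb⁻¹ ^ 2 * fa ^ 2 * fb * fa ^ 2 * fb * fa * fb * fa ^ 2 * fb) ∈ Subgroup.normalClosure ({v2503Rel} : Set (FreeGroup (Fin 2))) := hrel
  have hX : (fa⁻¹ ^ 2 * fb⁻¹ * fa⁻¹ ^ 2 * fb)⁻¹ * (((fb⁻¹ * fb⁻¹ * fa * fb⁻¹) * (fa⁻¹ ^ 2 * fb⁻¹ * fa⁻¹ ^ 2 * fb)⁻¹ * (fb⁻¹ * fb⁻¹ * fa * fb⁻¹)⁻¹) * (((fb⁻¹ * fb⁻¹) * (fa⁻¹ ^ 2 * fb⁻¹ * fa⁻¹ ^ 2 * fb)⁻¹ * (fb⁻¹ * fb⁻¹)⁻¹) * (((fb⁻¹ * fb⁻¹ * fa⁻¹ * fa⁻¹ * fb⁻¹ * fa⁻¹ * fb⁻¹) * (fa⁻¹ ^ 2 * fb⁻¹ * fa⁻¹ ^ 2 * fb)⁻¹ * (fb⁻¹ * fb⁻¹ * fa⁻¹ * fa⁻¹ * fb⁻¹ * fa⁻¹ * fb⁻¹)⁻¹) * ((fb⁻¹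 * fa * fa) * (fa⁻¹ ^ 2 * fb⁻¹ * fa⁻¹ ^ 2 * fb)⁻¹ * (fb⁻¹ * fa * fa)⁻¹)))) ∈
      Subgroup.normalClosure ({v2503Rel} : Set (FreeGroup (Fin 2))) := by
    rw [free_cert]
    exact Subgroup.mul_mem _ ((Subgroup.normalClosure_normal).conj_mem _ hRR _)
      ((Subgroup.normalClosure_normal).conj_mem _ hRR _)
  have h1 : PresentedGroup.mk {v2503Rel} ((fa⁻¹ ^ 2 * fb⁻¹ * fa⁻¹ ^ 2 * fb)⁻¹ * (((fb⁻¹ * fb⁻¹ * fa * fb⁻¹) * (fa⁻¹ ^ 2 * fb⁻¹ * fa⁻¹ ^ 2 * fb)⁻¹ * (fb⁻¹ * fb⁻¹ * fa * fb⁻¹)⁻¹) * (((fb⁻¹ * fb⁻¹) * (fa⁻¹ ^ 2 * fb⁻¹ * fa⁻¹ ^ 2 * fb)⁻¹ * (fb⁻¹ * fb⁻¹)⁻¹) * (((fb⁻¹ * fb⁻¹ * fa⁻¹ * fa⁻¹ * fb⁻¹ * fa⁻¹ * fb⁻¹) * (fa⁻¹ ^ 2 * fb⁻¹ * fa⁻¹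 ^ 2 * fb)⁻¹ * (fb⁻¹ * fb⁻¹ * fa⁻¹ * fa⁻¹ * fb⁻¹ * fa⁻¹ * fb⁻¹)⁻¹) * ((fb⁻¹ * fa * fa) * (fa⁻¹ ^ 2 * fb⁻¹ * fa⁻¹ ^ 2 * fb)⁻¹ * (fb⁻¹ * fa * fa)⁻¹))))) = 1 :=
    (QuotientGroup.eq_one_iff _).mpr hX
  simp only [map_mul, map_inv, map_pow] at h1
  have h3 : (va⁻¹ ^ 2 * vb⁻¹ * va⁻¹ ^ 2 * vb)⁻¹ * (((vb⁻¹ * vb⁻¹ * va * vb⁻¹) * (va⁻¹ ^ 2 * vb⁻¹ * va⁻¹ ^ 2 * vb)⁻¹ * (vb⁻¹ * vb⁻¹ * va * vb⁻¹)⁻¹) * (((vb⁻¹ * vb⁻¹) * (va⁻¹ ^ 2 * vb⁻¹ * va⁻¹ ^ 2 * vb)⁻¹ * (vb⁻¹ * vb⁻¹)⁻¹) * (((vb⁻¹ * vb⁻¹ * va⁻¹ * va⁻¹ * vb⁻¹ * va⁻¹ * vb⁻¹) * (va⁻¹ ^ 2 * vb⁻¹ * va⁻¹ ^ 2 * vb)⁻¹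 * (vb⁻¹ * vb⁻¹ * va⁻¹ * va⁻¹ * vb⁻¹ * va⁻¹ * vb⁻¹)⁻¹) * ((vb⁻¹ * va * va) * (va⁻¹ ^ 2 * vb⁻¹ * va⁻¹ ^ 2 * vb)⁻¹ * (vb⁻¹ * va * va)⁻¹)))) = 1 := h1
  have key : vlam = ((vb⁻¹ * vb⁻¹ * va * vb⁻¹) * (va⁻¹ ^ 2 * vb⁻¹ * va⁻¹ ^ 2 * vb)⁻¹ * (vb⁻¹ * vb⁻¹ * va * vb⁻¹)⁻¹) * (((vb⁻¹ * vb⁻¹) * (va⁻¹ ^ 2 * vb⁻¹ * va⁻¹ ^ 2 * vb)⁻¹ * (vb⁻¹ * vb⁻¹)⁻¹) * (((vb⁻¹ * vb⁻¹ * va⁻¹ * va⁻¹ * vb⁻¹ * va⁻¹ * vb⁻¹) * (va⁻¹ ^ 2 * vb⁻¹ * va⁻¹ ^ 2 * vb)⁻¹ * (vb⁻¹ * vb⁻¹ * va⁻¹ * va⁻¹ * vb⁻¹ * va⁻¹ * vb⁻¹)⁻¹) * ((vb⁻¹ * va * va) * (va⁻¹ ^ 2 * vb⁻¹ * va⁻¹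 ^ 2 * vb)⁻¹ * (vb⁻¹ * va * va)⁻¹))) := inv_mul_eq_one.mp h3
  have hmem : RCCSubmonoid ({vlam⁻¹} : Set V2503) (((vb⁻¹ * vb⁻¹ * va * vb⁻¹) * (va⁻¹ ^ 2 * vb⁻¹ * va⁻¹ ^ 2 * vb)⁻¹ * (vb⁻¹ * vb⁻¹ * va * vb⁻¹)⁻¹) * (((vb⁻¹ * vb⁻¹) * (va⁻¹ ^ 2 * vb⁻¹ * va⁻¹ ^ 2 * vb)⁻¹ * (vb⁻¹ * vb⁻¹)⁻¹) * (((vb⁻¹ * vb⁻¹ * va⁻¹ * va⁻¹ * vb⁻¹ * va⁻¹ * vb⁻¹) * (va⁻¹ ^ 2 * vb⁻¹ * va⁻¹ ^ 2 * vb)⁻¹ * (vb⁻¹ * vb⁻¹ * va⁻¹ * va⁻¹ * vb⁻¹ * va⁻¹ * vb⁻¹)⁻¹) * ((vb⁻¹ * va * va) * (va⁻¹ ^ 2 * vb⁻¹ * va⁻¹ ^ 2 * vb)⁻¹ * (vb⁻¹ * va * va)⁻¹)))) :=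
    .mul (.conj _ (.of rfl)) (.mul (.conj _ (.of rfl)) (.mul (.conj _ (.of rfl)) (.conj _ (.of rfl))))
  nth_rewrite 2 [key]
  exact hmem
end

section
/- In the group G = ⟨a, b | a²b⁻²ab⁻²a²ba²baba²b = 1⟩ with μ = b⁻²ab⁻²ab⁻¹, the identity μ⁻¹ = b a b a² b a b a² b a² holds. -/
theorem v2503_relator_eq_one :
    va ^ 2 * vb⁻¹ ^ 2 * va * vb⁻¹ ^ 2 * va ^ 2 * vb * va ^ 2 * vb * va * vb * va ^ 2 * vb = 1 :=
  PresentedGroup.one_of_mem (Set.mem_singleton v2503Rel)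

/-- in `π₁(v2503)`, `μ⁻¹ = b a b a² b a b a² b a²`. -/
theorem v2503_mu_inv :
    vmu⁻¹ = vb * va * vb * va ^ 2 * vb * va * vb * va ^ 2 * vb * va ^ 2 := by
  apply inv_eq_of_mul_eq_one_right
  calc vmu * (vb * va * vb * va ^ 2 * vb * va * vb * va ^ 2 * vb * va ^ 2)
      = va⁻¹ ^ 2 * (va ^ 2 * vb⁻¹ ^ 2 * va * vb⁻¹ ^ 2 * va ^ 2 * vb * va ^ 2 * vb * va * vb
          * va ^ 2 * vb) * va ^ 2 := by
        simp only [vmu, sq, mul_assoc, inv_mul_cancel_left]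
    _ = 1 := by rw [v2503_relator_eq_one]; group
end
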